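/- Let K be an algebraically closed field, n a natural number, and I a radical ideal of K[x_1,...,x_n] whose quotient K[x_1,...,x_n]/I is a nonzero finite-dimensional K-vector space. For each k ∈ {1,...,n}, let f_k denote the characteristic polynomial of the multiplication-by-x_k operator m_{x_k} on K[x_1,...,x_n]/I, and let S_k = {a_k : a ∈ Zero(I)} be the set of k-th coordinates of points of the zero set. If f_i = f_j for indices i, j, then S_i = S_j. -/

import Mathlib

/-!
The eigenvalues of multiplication by `f` on `K[x]/I` are the values of `f` on the zero set of `I`:
`μ` is an eigenvalue iff `[f] - μ` is not a unit, i.e. iff `I + (f - μ)` is a proper ideal, which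
by the weak Nullstellensatz means that `f - μ` vanishes at some zero of `I`. Hence the roots of the
characteristic polynomial of `m_{x_k}` are exactly the `k`-th coordinates of the zeros of `I`.
-/

theorem LinearMap.spectrum_mulLeft {R A : Type*} [CommSemiring R] [Ring A] [Algebra R A] (a : A) :
    spectrum R (LinearMap.mulLeft R a) = spectrum R a := by
  change spectrum R (Algebra.lmul R A a) = _
  ext r
  simp only [spectrum.mem_iff, ← Algebra.lmul_isUnit_iff (R := R), map_sub, AlgHom.commutes]

theorem Ideal.Quotient.isUnit_mk_iff {R : Type*} [CommRing R] {I : Ideal R} {g : R} :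
    IsUnit (Ideal.Quotient.mk I g) ↔ I ⊔ Ideal.span {g} = ⊤ := by
  rw [← Ideal.span_singleton_eq_top, ← Set.image_singleton, ← Ideal.map_span,
    ← (Ideal.comap_injective_of_surjective _ Ideal.Quotient.mk_surjective).eq_iff,
    Ideal.comap_map_of_surjective _ Ideal.Quotient.mk_surjective, ← RingHom.ker_eq_comap_bot,
    Ideal.mk_ker, Ideal.comap_top, sup_comm]

namespace MvPolynomial

variable {k K σ : Type*} [Field k] [Field K] [Algebra k K]

theorem mem_zeroLocus_sup_span_singleton_iff {I : Ideal (MvPolynomial σ k)}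
    {g : MvPolynomial σ k} {x : σ → K} :
    x ∈ zeroLocus K (I ⊔ Ideal.span {g}) ↔ x ∈ zeroLocus K I ∧ aeval x g = 0 := by
  simp only [← Set.singleton_subset_iff, le_zeroLocus_iff_le_vanishingIdeal, sup_le_iff,
    Ideal.span_singleton_le_iff_mem, mem_vanishingIdeal_singleton_iff]

theorem zeroLocus_nonempty_iff_ne_top [IsAlgClosed K] [Finite σ]
    {J : Ideal (MvPolynomial σ k)} :
    (zeroLocus K J).Nonempty ↔ J ≠ ⊤ := by
  rw [Set.nonempty_iff_ne_empty, Ne, Ne, not_iff_not]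
  constructor
  · intro h
    rw [← Ideal.radical_eq_top, ← vanishingIdeal_zeroLocus_eq_radical (K := K), h,
      vanishingIdeal_empty]
  · rintro rfl
    exact zeroLocus_top

variable [IsAlgClosed K] [Finite σ]

theorem mem_spectrum_quotient_mk_iff (I : Ideal (MvPolynomial σ K)) (f : MvPolynomial σ K)
    (μ : K) :
    μ ∈ spectrum K (Ideal.Quotient.mk I f) ↔ ∃ a ∈ zeroLocus K I, aeval a f = μ := by
  rw [spectrum.mem_iff, ← Ideal.Quotient.mk_algebraMap, algebraMap_eq, ← map_sub,
    Ideal.Quotient.isUnit_mk_iff, ← Ne, ← zeroLocus_nonempty_iff_ne_top (K := K)]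
  simp only [Set.Nonempty, mem_zeroLocus_sup_span_singleton_iff, map_sub, aeval_C,
    Algebra.algebraMap_self, RingHom.id_apply, sub_eq_zero, @eq_comm K μ]

theorem isRoot_charpoly_mulLeft_quotient_mk_iff (I : Ideal (MvPolynomial σ K))
    [FiniteDimensional K (MvPolynomial σ K ⧸ I)] (f : MvPolynomial σ K) (μ : K) :
    (LinearMap.mulLeft K (Ideal.Quotient.mk I f)).charpoly.IsRoot μ ↔
      ∃ a ∈ zeroLocus K I, aeval a f = μ := by
  rw [← Module.End.mem_spectrum_iff_isRoot_charpoly, LinearMap.spectrum_mulLeft,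
    mem_spectrum_quotient_mk_iff]

end MvPolynomial

theorem coord_sets_eq_of_charpoly_eq_general (K : Type*) [Field K] [IsAlgClosed K] (n : ℕ)
    (I : Ideal (MvPolynomial (Fin n) K))
    [FiniteDimensional K (MvPolynomial (Fin n) K ⧸ I)]
    (i j : Fin n)
    (h : LinearMap.charpoly
          (LinearMap.mulLeft K (Ideal.Quotient.mk I (MvPolynomial.X i)) :
            Module.End K (MvPolynomial (Fin n) K ⧸ I)) =
         LinearMap.charpoly
          (LinearMap.mulLeft K (Ideal.Quotient.mk I (MvPolynomial.X j)) :
            Module.End K (MvPolynomial (Fin n) K ⧸ I))) :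
    {x : K | ∃ a ∈ MvPolynomial.zeroLocus K I, a i = x} =
    {x : K | ∃ a ∈ MvPolynomial.zeroLocus K I, a j = x} := by
  ext x
  simpa only [MvPolynomial.isRoot_charpoly_mulLeft_quotient_mk_iff, MvPolynomial.aeval_X,
    eq_iff_iff, Set.mem_ofPred_eq] using
    congrArg (Polynomial.IsRoot · x) h

theorem coord_sets_eq_of_charpoly_eq (K : Type*) [Field K] [IsAlgClosed K] (n : ℕ)
    (I : Ideal (MvPolynomial (Fin n) K)) (hI : I.IsRadical)
    [FiniteDimensional K (MvPolynomial (Fin n) K ⧸ I)]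
    [Nontrivial (MvPolynomial (Fin n) K ⧸ I)]
    (i j : Fin n)
    (h : LinearMap.charpoly
          (LinearMap.mulLeft K (Ideal.Quotient.mk I (MvPolynomial.X i)) :
            Module.End K (MvPolynomial (Fin n) K ⧸ I)) =
         LinearMap.charpoly
          (LinearMap.mulLeft K (Ideal.Quotient.mk I (MvPolynomial.X j)) :
            Module.End K (MvPolynomial (Fin n) K ⧸ I))) :
    {x : K | ∃ a ∈ MvPolynomial.zeroLocus K I, a i = x} =
    {x : K | ∃ a ∈ MvPolynomial.zeroLocus K I, a j = x} :=
  coord_sets_eq_of_charpoly_eq_general K n I i j h
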